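/- Let a ⊆ K[T_1,...,T_r] be an ideal and γ_0 a face of the orthant γ = Q_{≥0}^r. Then V(T^r_{γ_0}; a) ≠ ∅ (i.e. γ_0 is an a-face) if and only if the monomial ∏_{e_i ∈ γ_0} T_i does not lie in the radical of the ideal a_{γ_0} = ⟨ f_{γ_0} : f ∈ a ⟩ ⊆ K[T_{γ_0}]. -/

import Mathlib

/-!
Substituting `0` for the variables `T_i` with `e_i ∉ γ₀` is pulling back along the projection
onto the coordinate subspace of `γ₀`. Hence a zero of `a` in the orbit `T^r_{γ₀}` is the same as
the projection of a zero `y` of `a_{γ₀}` with `y_i ≠ 0` for `e_i ∈ γ₀`, i.e. a zero of `a_{γ₀}` at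
which `∏_{e_i ∈ γ₀} T_i` does not vanish. By the Nullstellensatz such a zero exists iff the
monomial is not in the radical of `a_{γ₀}`.
-/

attribute [local instance] Classical.propDecidable

/-- A convex cone in `ℚ^r`. -/
def IsCone {r : ℕ} (σ : Set (Fin r → ℚ)) : Prop :=
  (0 : Fin r → ℚ) ∈ σ ∧ (∀ x ∈ σ, ∀ y ∈ σ, x + y ∈ σ) ∧
    ∀ c : ℚ, 0 ≤ c → ∀ x ∈ σ, c • x ∈ σ

/-- `τ` is a face of `σ`. -/
def IsFaceOf {r : ℕ} (τ σ : Set (Fin r → ℚ)) : Prop :=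
  τ ⊆ σ ∧ ∀ x ∈ σ, ∀ y ∈ σ, x + y ∈ τ → x ∈ τ ∧ y ∈ τ

namespace MvPolynomial

variable {K σ : Type*} [Field K] (P : σ → Prop) [DecidablePred P]

theorem eval_aeval_ite_X_zero (x : σ → K) (f : MvPolynomial σ K) :
    eval x (aeval (fun i => if P i then X i else 0) f) =
      eval (fun i => if P i then x i else 0) f := by
  rw [aeval_eq_bind₁]
  change eval₂Hom (RingHom.id K) x _ = _
  rw [eval₂Hom_bind₁]
  change eval₂Hom _ _ f = eval₂Hom _ _ f
  congr 2
  funext i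
  split_ifs <;> simp

theorem eval_prod_ite_X_one_ne_zero_iff [Fintype σ] (x : σ → K) :
    eval x (∏ i, if P i then X i else 1) ≠ 0 ↔ ∀ i, P i → x i ≠ 0 := by
  rw [map_prod, Finset.prod_ne_zero_iff]
  refine forall_congr' fun i => ?_
  by_cases h : P i <;> simp [h]

theorem exists_support_eq_and_vanishing_iff (a : Ideal (MvPolynomial σ K)) :
    (∃ x : σ → K, (∀ i, x i ≠ 0 ↔ P i) ∧ ∀ f ∈ a, eval x f = 0) ↔
      ∃ y : σ → K, (∀ i, P i → y i ≠ 0) ∧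
        ∀ f ∈ a, eval y (aeval (fun i => if P i then X i else 0) f) = 0 := by
  simp only [eval_aeval_ite_X_zero]
  constructor
  · rintro ⟨x, hsupp, hx⟩
    have hrestrict : (fun i => if P i then x i else 0) = x := by
      funext i
      by_cases h : P i
      · simp [h]
      · simp [h, not_not.mp ((hsupp i).not.mpr h)]
    exact ⟨x, fun i => (hsupp i).mpr, by simpa only [hrestrict] using hx⟩
  · rintro ⟨y, hy, hvanish⟩
    refine ⟨_, fun i => ?_, hvanish⟩
    by_cases h : P i <;> simp [h, hy]

theorem notMem_radical_iff_exists_mem_zeroLocus [IsAlgClosed K] [Finite σ]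
    (I : Ideal (MvPolynomial σ K)) (p : MvPolynomial σ K) :
    p ∉ I.radical ↔ ∃ x ∈ zeroLocus K I, eval x p ≠ 0 := by
  rw [← vanishingIdeal_zeroLocus_eq_radical (K := K), mem_vanishingIdeal_iff]
  push Not
  rfl

theorem mem_zeroLocus_map_iff {τ : Type*} (φ : MvPolynomial τ K →+* MvPolynomial σ K)
    (I : Ideal (MvPolynomial τ K)) (x : σ → K) :
    x ∈ zeroLocus K (I.map φ) ↔ ∀ f ∈ I, eval x (φ f) = 0 := by
  simp only [mem_zeroLocus_iff]
  refine ⟨fun hx f hf => hx _ (Ideal.mem_map_of_mem φ hf), fun hx => ?_⟩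
  have hle : I.map φ ≤ RingHom.ker (eval x) := Ideal.map_le_iff_le_comap.mpr hx
  exact fun g hg => hle hg

theorem exists_support_eq_and_vanishing_iff_prod_X_notMem_radical [IsAlgClosed K] [Fintype σ]
    (a : Ideal (MvPolynomial σ K)) :
    (∃ x : σ → K, (∀ i, x i ≠ 0 ↔ P i) ∧ ∀ f ∈ a, eval x f = 0) ↔
      (∏ i, if P i then X i else 1) ∉
        (a.map (aeval fun i => if P i then X i else (0 : MvPolynomial σ K)).toRingHom).radical := by
  rw [exists_support_eq_and_vanishing_iff, notMem_radical_iff_exists_mem_zeroLocus]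
  simp only [mem_zeroLocus_map_iff, eval_prod_ite_X_one_ne_zero_iff]
  exact exists_congr fun _ => and_comm

end MvPolynomial

theorem gitfan_stmt4_general {K : Type*} [Field K] [IsAlgClosed K] {r : ℕ}
    (a : Ideal (MvPolynomial (Fin r) K)) (γ0 : Set (Fin r → ℚ)) :
    (∃ x : Fin r → K, (∀ i, x i ≠ 0 ↔ Pi.single i (1 : ℚ) ∈ γ0) ∧
        ∀ f ∈ a, MvPolynomial.eval x f = 0)
    ↔ (∏ i : Fin r, if Pi.single i (1 : ℚ) ∈ γ0 then MvPolynomial.X i else 1) ∉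
        (a.map (MvPolynomial.aeval fun i : Fin r =>
          if Pi.single i (1 : ℚ) ∈ γ0 then MvPolynomial.X i
            else (0 : MvPolynomial (Fin r) K)).toRingHom).radical :=
  MvPolynomial.exists_support_eq_and_vanishing_iff_prod_X_notMem_radical
    (fun i => Pi.single i (1 : ℚ) ∈ γ0) a

/-- Let `a ⊆ K[T_1,…,T_r]` be an ideal and `γ₀` a face of the
orthant `γ = ℚ_{≥0}^r`.  Then `V(T^r_{γ₀}; a) ≠ ∅` (i.e. `γ₀` is an `a`-face:
the zero set of `a` meets the torus orbit of points whose `i`-th coordinate is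
nonzero exactly when `e_i ∈ γ₀`) if and only if the monomial `∏_{e_i ∈ γ₀} T_i`
does not lie in the radical of the ideal `a_{γ₀} = ⟨ f_{γ₀} : f ∈ a ⟩`, where
`f_{γ₀}` substitutes `0` for each variable `T_i` with `e_i ∉ γ₀`. -/
theorem gitfan_stmt4 {K : Type*} [Field K] [IsAlgClosed K] [CharZero K] {r : ℕ}
    (a : Ideal (MvPolynomial (Fin r) K)) (γ0 : Set (Fin r → ℚ))
    (hγ0 : IsCone γ0 ∧ IsFaceOf γ0 {x : Fin r → ℚ | ∀ i, 0 ≤ x i}) :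
    (∃ x : Fin r → K, (∀ i, x i ≠ 0 ↔ Pi.single i (1 : ℚ) ∈ γ0) ∧
        ∀ f ∈ a, MvPolynomial.eval x f = 0)
    ↔ (∏ i : Fin r, if Pi.single i (1 : ℚ) ∈ γ0 then MvPolynomial.X i else 1) ∉
        (a.map (MvPolynomial.aeval fun i : Fin r =>
          if Pi.single i (1 : ℚ) ∈ γ0 then MvPolynomial.X i
            else (0 : MvPolynomial (Fin r) K)).toRingHom).radical :=
  gitfan_stmt4_general a γ0
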